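/- arXiv:1507.03209 — 5 statements merged into one kernel-verified Lean document; each statement's English description precedes it below -/
import Mathlib

section
/- Let G be a digraph, b ∈ ℕ^V an upper bound vector, and x a chip-distribution. A legal game with upper bound b is a legal game in which each vertex v is fired at most b(v) times; it is maximal if it cannot be extended by any firing that is both legal and respects the bound. Then any two maximal legal games with upper bound b from initial distribution x have the same firing vector. -/
namespace ChipFiring

variable {V : Type*}

/-- Out-degree of a vertex: total multiplicity of edges leaving `v`. -/
def outdeg [Fintype V] (d : V → V → ℕ) (v : V) : ℕ := ∑ u, d v u

/-- In-degree of a vertex: total multiplicity of edges entering `v`. -/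
def indeg [Fintype V] (d : V → V → ℕ) (v : V) : ℕ := ∑ u, d u v

/-- A digraph (multiplicity function) has no loops. -/
def Loopless (d : V → V → ℕ) : Prop := ∀ v, d v v = 0

/-- Weak connectivity: each pair of vertices is joined by an undirected walk. -/
def WeaklyConnected (d : V → V → ℕ) : Prop :=
  ∀ u v : V, Relation.ReflTransGen (fun a b => d a b ≠ 0 ∨ d b a ≠ 0) u v

/-- Strong connectivity: each ordered pair of vertices is joined by a directed walk. -/
def StronglyConnected (d : V → V → ℕ) : Prop :=
  ∀ u v : V, Relation.ReflTransGen (fun a b => d a b ≠ 0) u v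

/-- Eulerian: out-degree equals in-degree at each vertex. -/
def Eulerian [Fintype V] (d : V → V → ℕ) : Prop := ∀ v, outdeg d v = indeg d v

/-- The Laplacian matrix: `L(u,u) = -d⁺(u)`, and `L(u,v) = d(v,u)` for `u ≠ v`. -/
def laplacian [Fintype V] [DecidableEq V] (d : V → V → ℕ) : Matrix V V ℤ :=
  fun u v => if u = v then -(outdeg d v : ℤ) else (d v u : ℤ)

/-- Firing vertex `v`: `v` sends one chip along each outgoing edge. -/
def fire [Fintype V] [DecidableEq V] (d : V → V → ℕ) (x : V → ℕ) (v : V) : V → ℕ :=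
  fun u => if u = v then x v - outdeg d v else x u + d v u

/-- `LegalSeq d x α` : the sequence of firings `α` is legal from initial distribution `x`. -/
def LegalSeq [Fintype V] [DecidableEq V] (d : V → V → ℕ) : (V → ℕ) → List V → Prop
  | _, [] => True
  | x, v :: rest => outdeg d v ≤ x v ∧ LegalSeq d (fire d x v) rest

/-- The chip-distribution obtained from `x` after performing the firings `α`. -/
def runGame [Fintype V] [DecidableEq V] (d : V → V → ℕ) : (V → ℕ) → List V → (V → ℕ)
  | x, [] => x
  | x, v :: rest => runGame d (fire d x v) rest

/-- The firing vector of a game: how many times each vertex is fired. -/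
def firingVector [DecidableEq V] (α : List V) : V → ℕ := fun v => α.count v

/-- `x ⤳ y` : some legal game transforms `x` into `y`. -/
def Reaches [Fintype V] [DecidableEq V] (d : V → V → ℕ) (x y : V → ℕ) : Prop :=
  ∃ α : List V, LegalSeq d x α ∧ runGame d x α = y

/-- A period vector: a nonnegative integer vector in the kernel of the Laplacian. -/
def PeriodVector [Fintype V] [DecidableEq V] (d : V → V → ℕ) (p : V → ℕ) : Prop :=
  (laplacian d).mulVec (fun v => (p v : ℤ)) = 0

/-- A vector `f ∈ ℕ^V` is reduced if `f ≥ p` fails for every nonzero period vector `p`. -/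
def Reduced [Fintype V] [DecidableEq V] (d : V → V → ℕ) (f : V → ℕ) : Prop :=
  ∀ p : V → ℕ, PeriodVector d p → p ≠ 0 → ¬ (∀ v, p v ≤ f v)

/-- A distribution is recurrent if a nonempty legal game transforms it back to itself. -/
def Recurrent [Fintype V] [DecidableEq V] (d : V → V → ℕ) (x : V → ℕ) : Prop :=
  ∃ α : List V, α ≠ [] ∧ LegalSeq d x α ∧ runGame d x α = x

/-- Linear equivalence: `x = y + Lz` for some integer vector `z`. -/
def LinEquiv [Fintype V] [DecidableEq V] (d : V → V → ℕ) (x y : V → ℕ) : Prop :=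
  ∃ z : V → ℤ, ∀ v, (x v : ℤ) = (y v : ℤ) + (laplacian d).mulVec z v

/-- `x` is non-terminating: there is an infinite sequence of legal firings from `x`. -/
def NonTerminating [Fintype V] [DecidableEq V] (d : V → V → ℕ) (x : V → ℕ) : Prop :=
  ∃ s : ℕ → V, ∀ n : ℕ, LegalSeq d x (List.ofFn (fun i : Fin n => s i))

end ChipFiring

/-!
Chips at a vertex `v` after a legal game are `x v - f(v) d⁺(v) + ∑_{u ≠ v} f(u) d(u,v)`, where `f` is
the firing vector, so they are monotone in the firings of the other vertices. Let `β` be a maximal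
game with bound `b` and `α` any legal game with bound `b`. Along `α`, the firing vector of the
played prefix stays below that of `β`: were the next firing of `w` to break this, `β` would have
fired `w` exactly as often as the prefix and every other vertex at least as often, so `w` would
still be legal after `β` and below its bound, against maximality. Exchanging the roles of `α`
and `β` gives equality.
-/

namespace ChipFiring

section

variable {V : Type*} [Fintype V] [DecidableEq V] (d : V → V → ℕ)

lemma legalSeq_append_singleton (x : V → ℕ) (γ : List V) (v : V) :
    LegalSeq d x (γ ++ [v]) ↔ LegalSeq d x γ ∧ outdeg d v ≤ runGame d x γ v := by
  induction γ generalizing x with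
  | nil => simp [LegalSeq, runGame]
  | cons a γ ih => simp [LegalSeq, runGame, ih, and_assoc]

lemma sum_erase_count_cons_mul (α : List V) (a v : V) (c : V → ℕ) :
    ∑ u ∈ Finset.univ.erase v, (a :: α).count u * c u
      = ∑ u ∈ Finset.univ.erase v, α.count u * c u + if a = v then 0 else c a := by
  simp only [List.count_cons, beq_iff_eq, add_mul, ite_mul, one_mul, zero_mul,
    Finset.sum_add_distrib, Finset.sum_ite_eq, Finset.mem_erase, Finset.mem_univ, and_true]
  split_ifs <;> simp_all

/-- Stated in `ℕ`: along a legal game the truncated subtraction in `fire` never truncates. -/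
lemma runGame_add_count_mul_outdeg {x : V → ℕ} {α : List V} (hα : LegalSeq d x α) (v : V) :
    runGame d x α v + α.count v * outdeg d v
      = x v + ∑ u ∈ Finset.univ.erase v, α.count u * d u v := by
  induction α generalizing x with
  | nil => simp [runGame]
  | cons a α ih =>
    obtain ⟨ha, hrest⟩ := hα
    have := ih hrest
    rw [runGame, sum_erase_count_cons_mul]
    by_cases hav : a = v
    · subst hav
      simp only [fire, if_true, List.count_cons_self, add_one_mul] at this ⊢
      omega
    · simp only [fire, Ne.symm hav, if_false, List.count_cons, beq_iff_eq, hav, add_zero] at this ⊢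
      omega

lemma runGame_le_runGame_of_count {x : V → ℕ} {γ β : List V} (hγ : LegalSeq d x γ)
    (hβ : LegalSeq d x β) (hle : ∀ u, γ.count u ≤ β.count u) {v : V}
    (hv : γ.count v = β.count v) : runGame d x γ v ≤ runGame d x β v := by
  have hsum : ∑ u ∈ Finset.univ.erase v, γ.count u * d u v
      ≤ ∑ u ∈ Finset.univ.erase v, β.count u * d u v :=
    Finset.sum_le_sum fun u _ => Nat.mul_le_mul_right _ (hle u)
  have hγv := runGame_add_count_mul_outdeg d hγ v
  have hβv := runGame_add_count_mul_outdeg d hβ v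
  rw [hv] at hγv
  omega

lemma count_le_count_of_maximal {b x : V → ℕ} {β : List V} (hβ : LegalSeq d x β)
    (hβmax : ¬ ∃ v, outdeg d v ≤ runGame d x β v ∧ β.count v < b v) {α : List V}
    (hα : LegalSeq d x α) (hαb : ∀ v, α.count v ≤ b v) (v : V) :
    α.count v ≤ β.count v := by
  induction α using List.reverseRecOn generalizing v with
  | nil => simp
  | append_singleton γ w ih =>
    obtain ⟨hγ, hw⟩ := (legalSeq_append_singleton d x γ w).1 hα
    have hγle : ∀ u, γ.count u ≤ β.count u :=
      ih hγ fun u => (List.Sublist.count_le u (List.sublist_append_left γ [w])).trans (hαb u)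
    rcases eq_or_ne v w with rfl | hvw
    · by_contra! hlt
      have hαv := hαb v
      rw [List.count_append, List.count_singleton_self] at hlt hαv
      have hv : γ.count v = β.count v := le_antisymm (hγle v) (by omega)
      have hlegal := hw.trans (runGame_le_runGame_of_count d hγ hβ hγle hv)
      exact hβmax ⟨v, hlegal, by omega⟩
    · simpa [List.count_append, List.count_singleton, hvw.symm] using hγle v

end

theorem bounded_abelian_property_general {V : Type*} [Fintype V] [DecidableEq V] (d : V → V → ℕ)
    (b x : V → ℕ) (α β : List V)
    (hα : LegalSeq d x α) (hαb : ∀ v, α.count v ≤ b v)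
    (hβ : LegalSeq d x β) (hβb : ∀ v, β.count v ≤ b v)
    (hαmax : ¬ ∃ v, outdeg d v ≤ runGame d x α v ∧ α.count v < b v)
    (hβmax : ¬ ∃ v, outdeg d v ≤ runGame d x β v ∧ β.count v < b v) :
    firingVector α = firingVector β :=
  funext fun v => le_antisymm (count_le_count_of_maximal d hβ hβmax hα hαb v)
    (count_le_count_of_maximal d hα hαmax hβ hβb v)

/-- Any two maximal legal games with upper bound `b` from initial
distribution `x` have the same firing vector. -/
theorem bounded_abelian_property {V : Type*} [Fintype V] [DecidableEq V] (d : V → V → ℕ)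
    (hloop : Loopless d) (hconn : WeaklyConnected d) (b x : V → ℕ) (α β : List V)
    (hα : LegalSeq d x α) (hαb : ∀ v, α.count v ≤ b v)
    (hβ : LegalSeq d x β) (hβb : ∀ v, β.count v ≤ b v)
    (hαmax : ¬ ∃ v, outdeg d v ≤ runGame d x α v ∧ α.count v < b v)
    (hβmax : ¬ ∃ v, outdeg d v ≤ runGame d x β v ∧ β.count v < b v) :
    firingVector α = firingVector β :=
  bounded_abelian_property_general d b x α β hα hαb hβ hβb hαmax hβmax

end ChipFiring
end

section
/- Let p be a period vector of a digraph G, and suppose α = (v_1, v_2, …, v_s) is a legal sequence of firings on G from some initial chip-distribution x. Let α' be the sequence obtained from α by deleting, for each vertex v, the first p(v) occurrences of v in α (all occurrences of v if v occurs fewer than p(v) times). Then α' is also a legal sequence of firings from the same initial distribution x. -/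
namespace ChipFiring

/-- Delete, for each vertex `v`, the first `p v` occurrences of `v` from a list
(all occurrences if `v` occurs fewer than `p v` times). -/
def dropOcc {V : Type*} [DecidableEq V] (p : V → ℕ) : List V → List V
  | [] => []
  | v :: rest =>
      if p v = 0 then v :: dropOcc p rest
      else dropOcc (Function.update p v (p v - 1)) rest

private theorem dropOcc_legal_aux [Fintype V] [DecidableEq V] (d : V → V → ℕ) (hloop : Loopless d)
    (P : V → ℕ) (hP : ∀ v, (P v : ℤ) * outdeg d v = ∑ u, (P u : ℤ) * d u v) :
    ∀ (α : List V) (x y r : V → ℕ), LegalSeq d x α → (∀ v, r v ≤ P v) →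
    (∀ u, (y u : ℤ) + ∑ w, ((P w : ℤ) - r w) * d w u
        = (x u : ℤ) + ((P u : ℤ) - r u) * outdeg d u) →
    LegalSeq d y (dropOcc r α) := by
  intro α
  induction α with
  | nil => intro x y r _ _ _; simp [dropOcc, LegalSeq]
  | cons v rest ih =>
    intro x y r hleg hr hinv
    obtain ⟨hxv, hrest⟩ := hleg
    rw [dropOcc]
    by_cases h : r v = 0
    · simp only [h, if_pos rfl]
      have hyx : (x v : ℤ) ≤ y v := by
        have h1 := hinv v
        rw [h] at h1
        have h2 : ∑ w, ((P w : ℤ) - r w) * d w v ≤ ∑ w, (P w : ℤ) * d w v := by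
          apply Finset.sum_le_sum
          intro w _
          have : ((P w : ℤ) - r w) ≤ P w := by
            have : (0:ℤ) ≤ r w := Int.ofNat_nonneg _
            linarith
          exact mul_le_mul_of_nonneg_right this (Int.ofNat_nonneg _)
        rw [← hP v] at h2
        push_cast at h1 ⊢
        linarith
      have hov : outdeg d v ≤ y v := by
        have : (outdeg d v : ℤ) ≤ y v := le_trans (by exact_mod_cast hxv) hyx
        exact_mod_cast this
      refine ⟨hov, ih (fire d x v) (fire d y v) r hrest hr ?_⟩
      intro u
      by_cases hu : u = v
      · subst hu
        have h1 := hinv u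
        simp only [fire, if_pos rfl, ite_true]
        rw [Int.ofNat_sub hov, Int.ofNat_sub hxv]
        linarith
      · have h1 := hinv u
        simp only [fire, if_neg hu]
        push_cast
        linarith
    · simp only [h, if_neg h]
      have hrv : 1 ≤ r v := Nat.one_le_iff_ne_zero.mpr h
      refine ih (fire d x v) y (Function.update r v (r v - 1)) hrest ?_ ?_
      · intro w
        by_cases hw : w = v
        · subst hw; rw [Function.update_self]; exact le_trans (Nat.sub_le _ _) (hr w)
        · rw [Function.update_of_ne hw]; exact hr w
      · intro u
        have h1 := hinv u
        have hsum : ∑ w, ((P w : ℤ) - (Function.update r v (r v - 1) w)) * d w u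
            = (∑ w, ((P w : ℤ) - r w) * d w u) + d v u := by
          rw [← Finset.sum_add_sum_compl {v}, ← Finset.sum_add_sum_compl {v}
            (f := fun w => ((P w : ℤ) - r w) * d w u)]
          simp only [Finset.sum_singleton, Function.update_self]
          have hcast : ((r v - 1 : ℕ) : ℤ) = (r v : ℤ) - 1 := by
            rw [Nat.cast_sub hrv]; simp
          rw [hcast]
          have hrest2 : ∑ w ∈ ({v} : Finset V)ᶜ, ((P w : ℤ) - (Function.update r v (r v - 1) w)) * d w u
              = ∑ w ∈ ({v} : Finset V)ᶜ, ((P w : ℤ) - r w) * d w u := by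
            apply Finset.sum_congr rfl
            intro w hw
            rw [Function.update_of_ne (by simpa using hw)]
          rw [hrest2]; ring
        rw [hsum]
        by_cases hu : u = v
        · subst hu
          simp only [fire, if_pos rfl, ite_true, Function.update_self]
          rw [Int.ofNat_sub hxv, hloop u]
          have hcast : ((r u - 1 : ℕ) : ℤ) = (r u : ℤ) - 1 := by
            rw [Nat.cast_sub hrv]; simp
          rw [hcast]
          push_cast
          linarith [h1]
        · simp only [fire, if_neg hu, Function.update_of_ne hu]
          push_cast
          linarith [h1]

/-- If `p` is a period vector and `α` is a legal sequence of firings from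
`x`, then the sequence obtained by deleting the first `p v` occurrences of each vertex `v`
from `α` is also legal from `x`. -/
theorem legal_of_dropOcc_period {V : Type*} [Fintype V] [DecidableEq V] (d : V → V → ℕ)
    (hloop : Loopless d) (hconn : WeaklyConnected d) (p : V → ℕ)
    (hp : PeriodVector d p) (x : V → ℕ) (α : List V) (hα : LegalSeq d x α) :
    LegalSeq d x (dropOcc p α) := by
  have hP : ∀ v, (p v : ℤ) * outdeg d v = ∑ u, (p u : ℤ) * d u v := by
    intro v
    have h0 := congrFun hp v
    simp only [Matrix.mulVec, dotProduct, laplacian, Pi.zero_apply] at h0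
    have hsplit : ∑ u, (if v = u then -(outdeg d u : ℤ) else (d u v : ℤ)) * p u
        = -(outdeg d v : ℤ) * p v + ∑ u ∈ ({v} : Finset V)ᶜ, (d u v : ℤ) * p u := by
      rw [← Finset.sum_add_sum_compl {v}]
      simp only [Finset.sum_singleton, if_pos rfl]
      congr 1
      apply Finset.sum_congr rfl
      intro u hu
      have hne : u ≠ v := by simpa using (Finset.mem_compl.mp hu)
      rw [if_neg (fun he => hne he.symm)]
    rw [hsplit] at h0
    have h2 : ∑ u, (p u : ℤ) * d u v
        = (p v : ℤ) * d v v + ∑ u ∈ ({v} : Finset V)ᶜ, (p u : ℤ) * d u v := by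
      rw [← Finset.sum_add_sum_compl {v}]; simp
    rw [h2, hloop v]
    have h3 : ∑ u ∈ ({v} : Finset V)ᶜ, (p u : ℤ) * d u v
        = ∑ u ∈ ({v} : Finset V)ᶜ, (d u v : ℤ) * p u := by
      apply Finset.sum_congr rfl; intro u _; ring
    rw [h3]
    push_cast
    linarith
  exact dropOcc_legal_aux d hloop p hP α x x p hα (fun v => le_refl _)
    (fun u => by simp)


end ChipFiring
end

section
/- Let G be a digraph and x, y chip-distributions with x ⤳ y. Then there exists a legal game transforming x into y whose firing vector f is reduced, i.e., f ≥ p fails for every nonzero period vector p of G. -/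
namespace ChipFiring

open Matrix

section

variable {V : Type*} [DecidableEq V]

def eraseFirst (q : V → ℕ) : List V → List V
  | [] => []
  | v :: t =>
    if q v = 0 then v :: eraseFirst q t else eraseFirst (Function.update q v (q v - 1)) t

theorem eraseFirst_sublist (q : V → ℕ) (α : List V) :
    (eraseFirst q α).Sublist α := by
  induction α generalizing q with
  | nil => exact List.Sublist.slnil
  | cons a t ih =>
    rw [eraseFirst]
    split_ifs
    · exact (ih q).cons_cons a
    · exact (ih _).cons a

theorem count_eraseFirst (q : V → ℕ) (α : List V) (v : V) :
    (eraseFirst q α).count v = α.count v - q v := by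
  induction α generalizing q with
  | nil => simp [eraseFirst]
  | cons a t ih =>
    rw [eraseFirst]
    split_ifs with hq
    · rcases eq_or_ne a v with rfl | hav
      · simp [ih, hq]
      · simp [hav, ih]
    · rcases eq_or_ne a v with rfl | hav
      · simp only [ih, Function.update_self, List.count_cons_self]
        omega
      · simp [hav, ih, Function.update_of_ne hav.symm]

section Laplacian

variable [Fintype V] {d : V → V → ℕ}

theorem cast_fire {x : V → ℕ} {v : V} (hv : outdeg d v ≤ x v) :
    (fun u => (fire d x v u : ℤ)) = (fun u => (x u : ℤ)) + laplacian d *ᵥ Pi.single v 1 := by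
  ext u
  rw [mulVec_single_one]
  rcases eq_or_ne u v with rfl | huv
  · simp [fire, laplacian, Nat.cast_sub hv, sub_eq_add_neg]
  · simp [fire, laplacian, huv]

/-- Only the diagonal entries of the Laplacian are negative. -/
theorem laplacian_mulVec_apply_nonneg {q : V → ℕ} {a : V} (ha : q a = 0) :
    0 ≤ (laplacian d *ᵥ fun u => (q u : ℤ)) a := by
  refine Finset.sum_nonneg fun u _ => ?_
  rcases eq_or_ne a u with rfl | hau
  · simp [ha]
  · simp only [laplacian, if_neg hau]
    positivity

theorem LegalSeq.eraseFirst_of_eq_add_laplacian {α : List V} {c z q : V → ℕ}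
    (hα : LegalSeq d c α) (hq : q ≤ firingVector α)
    (hz : (fun v => (z v : ℤ)) = (fun v => (c v : ℤ)) + laplacian d *ᵥ fun v => (q v : ℤ)) :
    LegalSeq d z (eraseFirst q α) ∧ runGame d z (eraseFirst q α) = runGame d c α := by
  induction α generalizing c z q with
  | nil =>
    obtain rfl : q = 0 := funext fun v => Nat.le_zero.mp (hq v)
    obtain rfl : z = c := by
      ext v
      simpa [← Pi.zero_def] using congrFun hz v
    exact ⟨trivial, rfl⟩
  | cons a t ih =>
    obtain ⟨hca, hct⟩ := hα
    rw [eraseFirst]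
    split_ifs with hqa
    · have hza : outdeg d a ≤ z a := by
        have hza := congrFun hz a
        have hLq := laplacian_mulVec_apply_nonneg (d := d) hqa
        simp only [Pi.add_apply] at hza
        omega
      have hq' : q ≤ firingVector t := fun v => by
        have := hq v
        rcases eq_or_ne a v with rfl | hav
        · simp [hqa]
        · simpa [firingVector, List.count_cons, hav] using this
      refine (ih hct hq' ?_).imp_left fun h => ⟨hza, h⟩
      rw [cast_fire hza, cast_fire hca, hz]
      abel
    · set q' := Function.update q a (q a - 1)
      have hq' : q' ≤ firingVector t := fun v => by
        have := hq v
        rcases eq_or_ne a v with rfl | hav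
        · simp only [q', Function.update_self]
          simp only [firingVector, List.count_cons_self] at this ⊢
          omega
        · simpa [q', firingVector, List.count_cons, hav, Function.update_of_ne hav.symm] using this
      have hqq' : (fun v => (q v : ℤ)) = (fun v => (q' v : ℤ)) + Pi.single a 1 := by
        ext v
        rcases eq_or_ne v a with rfl | hva
        · simp [q']
          omega
        · simp [q', hva]
      refine ih hct hq' ?_
      rw [cast_fire hca, hz, hqq', mulVec_add]
      abel

theorem LegalSeq.eraseFirst_period {α : List V} {x p : V → ℕ} (hα : LegalSeq d x α)
    (hp : PeriodVector d p) (hpα : p ≤ firingVector α) :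
    LegalSeq d x (eraseFirst p α) ∧ runGame d x (eraseFirst p α) = runGame d x α :=
  hα.eraseFirst_of_eq_add_laplacian hpα (by rw [PeriodVector] at hp; rw [hp, add_zero])

theorem LegalSeq.exists_reduced {x : V → ℕ} {α : List V} (hα : LegalSeq d x α) :
    ∃ β, LegalSeq d x β ∧ runGame d x β = runGame d x α ∧ Reduced d (firingVector β) := by
  by_cases hred : Reduced d (firingVector α)
  · exact ⟨α, hα, rfl, hred⟩
  obtain ⟨p, hp, hp0, hpα⟩ : ∃ p, PeriodVector d p ∧ p ≠ 0 ∧ p ≤ firingVector α := by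
    simpa [Reduced, Pi.le_def] using hred
  obtain ⟨hβ, hβα⟩ := hα.eraseFirst_period hp hpα
  have hlt : (eraseFirst p α).length < α.length := by
    refine (eraseFirst_sublist p α).length_le.lt_of_ne fun hlen => hp0 (funext fun v => ?_)
    have hcount := congrArg (List.count v) ((eraseFirst_sublist p α).eq_of_length hlen)
    have hpv := hpα v
    rw [count_eraseFirst] at hcount
    simp only [firingVector, Pi.zero_apply] at hpv ⊢
    omega
  obtain ⟨γ, hγ, hγβ, hγred⟩ := exists_reduced hβ
  exact ⟨γ, hγ, hγβ.trans hβα, hγred⟩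
termination_by α.length

end Laplacian

end

theorem reaches_with_reduced_firing_vector_general {V : Type*} [Fintype V] [DecidableEq V]
    (d : V → V → ℕ) (x y : V → ℕ) (h : Reaches d x y) :
    ∃ α : List V, LegalSeq d x α ∧ runGame d x α = y ∧ Reduced d (firingVector α) := by
  obtain ⟨α, hα, rfl⟩ := h
  exact hα.exists_reduced

/-- If `x ⤳ y` then there is a legal game transforming `x` into `y`
whose firing vector is reduced. -/
theorem reaches_with_reduced_firing_vector {V : Type*} [Fintype V] [DecidableEq V]
    (d : V → V → ℕ) (hloop : Loopless d) (hconn : WeaklyConnected d)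
    (x y : V → ℕ) (h : Reaches d x y) :
    ∃ α : List V, LegalSeq d x α ∧ runGame d x α = y ∧ Reduced d (firingVector α) :=
  reaches_with_reduced_firing_vector_general d x y h

end ChipFiring
end

section
/- Let G be a connected Eulerian digraph, x, y chip-distributions, and f ∈ ℕ^V a nonzero vector with y = x + Lf and min_v f(v) = 0. Let t = max_v f(v), for 1 ≤ j ≤ t let S_j = {v ∈ V : f(v) ≥ t − j + 1}, and for 1 ≤ j ≤ t+1 let x_j = x + L·∑_{ℓ=1}^{j−1} 1_{S_ℓ} (so x_1 = x and x_{t+1} = y). Then x ⤳ y if and only if for every index j ∈ {1, …, t} with j = t or S_j ≠ S_{j+1} (the last occurrence of each distinct set in the chain S_1 ⊆ … ⊆ S_t), the vector x_j is a chip-distribution (nonnegative) and there is a legal game from x_j to x_{j+1}. -/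
namespace ChipFiring


/-!
If a legal game `α` leads from `x` to `y = x + L f`, then `L (count α - f) = 0`; the kernel of the
Laplacian of a strongly connected Eulerian digraph (and weakly connected Eulerian digraphs are
strongly connected) consists of the constant vectors, so `α` fires every vertex `f v + k` times.
In a legal game, a vertex at the moment it first reaches the maximal firing count has gained no
chips, so it was ready at the start: every legal game can be reordered to begin by firing each of
its most fired vertices once. These form `S_1`; peeling off `S_1`, then `S_2`, … cuts `α` into
legal games `x_j ⤳ x_{j+1}`.

Conversely, a game `x_j ⤳ x_{j+1} = x_j + L 1_{S_j}` fires the vertices of `S_j` once more than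
the others, so by the same reordering `S_j` can be fired once each from `x_j`. Firing `S_j` only
removes chips from `S_j`, so when `S_j = S_{j+1}` a firing of `S_{j+1}` that is legal from
`x_{j+1}` is legal from `x_j` too. Going down from the marked indices every `S_j` can be fired from
`x_j`, and chaining these firings gives `x ⤳ y`.
-/

open Matrix Finset

section Firing

variable {V : Type*} [Fintype V] [DecidableEq V] {d : V → V → ℕ}

@[simp] lemma fire_apply_self (x : V → ℕ) (v : V) : fire d x v v = x v - outdeg d v := by
  simp [fire]

@[simp] lemma fire_apply_of_ne {x : V → ℕ} {u v : V} (h : u ≠ v) :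
    fire d x v u = x u + d v u := by
  simp [fire, h]

lemma fire_cast {x : V → ℕ} {w : V} (hw : outdeg d w ≤ x w) (v : V) :
    (fire d x w v : ℤ) = x v + laplacian d v w := by
  by_cases hv : v = w
  · subst hv
    simp [laplacian, Nat.cast_sub hw, sub_eq_add_neg]
  · simp [laplacian, hv]

lemma runGame_cast {x : V → ℕ} {α : List V} (hα : LegalSeq d x α) (v : V) :
    (runGame d x α v : ℤ) = x v + (laplacian d *ᵥ fun u => (α.count u : ℤ)) v := by
  induction α generalizing x with
  | nil => simp [runGame, mulVec, dotProduct]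
  | cons w α ih =>
    rw [runGame, ih hα.2, fire_cast hα.1]
    simp only [mulVec, dotProduct, List.count_cons, beq_iff_eq, Nat.cast_add, Nat.cast_ite,
      Nat.cast_one, Nat.cast_zero, mul_add, mul_ite, mul_one, mul_zero, sum_add_distrib, sum_ite_eq,
      mem_univ, if_true]
    ring

lemma legalSeq_append {x : V → ℕ} {α β : List V} :
    LegalSeq d x (α ++ β) ↔ LegalSeq d x α ∧ LegalSeq d (runGame d x α) β := by
  induction α generalizing x with
  | nil => simp [LegalSeq, runGame]
  | cons v α ih => simp [LegalSeq, runGame, ih, and_assoc]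

lemma runGame_append (x : V → ℕ) (α β : List V) :
    runGame d x (α ++ β) = runGame d (runGame d x α) β := by
  induction α generalizing x with
  | nil => rfl
  | cons v α ih => exact ih _

lemma Reaches.trans {x y z : V → ℕ} (hxy : Reaches d x y) (hyz : Reaches d y z) :
    Reaches d x z := by
  obtain ⟨α, hα, rfl⟩ := hxy
  obtain ⟨β, hβ, rfl⟩ := hyz
  exact ⟨α ++ β, legalSeq_append.2 ⟨hα, hβ⟩, runGame_append x α β⟩

lemma LegalSeq.mono {x z : V → ℕ} {α : List V} (hα : LegalSeq d x α)
    (hxz : ∀ v ∈ α, x v ≤ z v) : LegalSeq d z α := by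
  induction α generalizing x z with
  | nil => trivial
  | cons w α ih =>
    refine ⟨hα.1.trans (hxz w List.mem_cons_self), ih hα.2 fun v hv => ?_⟩
    by_cases hvw : v = w
    · subst hvw
      simpa using Nat.sub_le_sub_right (hxz v List.mem_cons_self) _
    · simpa [hvw] using hxz v (List.mem_cons_of_mem _ hv)

lemma fire_comm {x : V → ℕ} {u v : V} (huv : u ≠ v) (hu : outdeg d u ≤ x u)
    (hv : outdeg d v ≤ x v) : fire d (fire d x u) v = fire d (fire d x v) u := by
  funext w
  by_cases hwu : w = u <;> by_cases hwv : w = v <;> simp_all [fire] <;> omega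

/-- A ready vertex stays ready while other vertices fire, and firings commute. -/
lemma LegalSeq.cons_erase {x : V → ℕ} {α : List V} {u : V} (hα : LegalSeq d x α)
    (hu : outdeg d u ≤ x u) : LegalSeq d x (u :: α.erase u) := by
  induction α generalizing x with
  | nil => exact ⟨hu, trivial⟩
  | cons w α ih =>
    by_cases hwu : w = u
    · subst hwu
      simpa using hα
    · have hw : outdeg d w ≤ x w := hα.1
      have hu' : outdeg d u ≤ fire d x w u := by rw [fire_apply_of_ne (Ne.symm hwu)]; omega
      obtain ⟨-, hrest⟩ := ih hα.2 hu'
      rw [List.erase_cons_tail (by simpa using hwu)]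
      refine ⟨hu, ?_, ?_⟩
      · rw [fire_apply_of_ne hwu]; omega
      · rwa [fire_comm (Ne.symm hwu) hu hw]

lemma laplacian_mulVec_apply (hloop : Loopless d) (heul : Eulerian d) (g : V → ℤ) (v : V) :
    (laplacian d *ᵥ g) v = ∑ u, (d u v : ℤ) * (g u - g v) := by
  have hL : ∀ u, laplacian d v u = d u v - if v = u then (outdeg d v : ℤ) else 0 := by
    intro u
    by_cases h : v = u
    · subst h; simp [laplacian, hloop v]
    · simp [laplacian, h]
  simp only [mulVec, dotProduct, hL, sub_mul, sum_sub_distrib, ite_mul, zero_mul, sum_ite_eq,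
    mem_univ, if_true, heul v, indeg, Nat.cast_sum, mul_sub, sum_mul]

lemma laplacian_mulVec_nonpos_of_isMax (hloop : Loopless d) (heul : Eulerian d) {g : V → ℤ}
    {v : V} (hv : ∀ u, g u ≤ g v) : (laplacian d *ᵥ g) v ≤ 0 := by
  rw [laplacian_mulVec_apply hloop heul]
  exact sum_nonpos fun u _ => mul_nonpos_of_nonneg_of_nonpos (by positivity) (by linarith [hv u])

/-- No edge leaves `R`, so balancing out- against in-degrees over `R` leaves no room for an edge
entering `R`. -/
lemma Eulerian.mem_of_adj_of_forall_adj_mem (heul : Eulerian d) {R : Finset V}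
    (hR : ∀ v ∈ R, ∀ u, d v u ≠ 0 → u ∈ R) {u v : V} (hv : v ∈ R) (huv : d u v ≠ 0) :
    u ∈ R := by
  have hout : ∀ v ∈ R, outdeg d v = ∑ u ∈ R, d v u := fun v hv =>
    (sum_subset (subset_univ R) fun u _ hu => not_not.1 fun h => hu (hR v hv u h)).symm
  have hsplit : ∑ v ∈ R, indeg d v = ∑ v ∈ R, ∑ u ∈ R, d u v + ∑ v ∈ R, ∑ u ∈ Rᶜ, d u v := by
    rw [← sum_add_distrib]
    exact sum_congr rfl fun v _ => (sum_add_sum_compl R _).symm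
  have hcompl : ∑ v ∈ R, ∑ u ∈ Rᶜ, d u v = 0 := by
    have := sum_congr rfl fun v (_ : v ∈ R) => heul v
    rw [sum_congr rfl hout, hsplit, sum_comm] at this
    omega
  by_contra hu
  exact huv (sum_eq_zero_iff.1 (sum_eq_zero_iff.1 hcompl v hv) u (mem_compl.2 hu))

lemma WeaklyConnected.stronglyConnected (hconn : WeaklyConnected d) (heul : Eulerian d) :
    StronglyConnected d := by
  classical
  have hback : ∀ a b, d a b ≠ 0 → Relation.ReflTransGen (fun p q => d p q ≠ 0) b a := by
    intro a b hab
    let R : Finset V := {w | Relation.ReflTransGen (fun p q => d p q ≠ 0) b w}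
    have hR : ∀ v ∈ R, ∀ u, d v u ≠ 0 → u ∈ R := by
      intro v hv u hvu
      simp only [R, mem_filter, mem_univ, true_and] at hv ⊢
      exact hv.tail hvu
    have hbR : b ∈ R := by simp [R, Relation.ReflTransGen.refl]
    simpa [R] using heul.mem_of_adj_of_forall_adj_mem hR hbR hab
  intro u v
  induction hconn u v with
  | refl => exact .refl
  | tail _ h ih => exact h.elim ih.tail fun h => ih.trans (hback _ _ h)

/-- Maximum principle: where `g` is maximal, `L g = 0` forces `g` to be maximal at every
in-neighbour as well. -/
lemma eq_of_laplacian_mulVec_eq_zero (hloop : Loopless d) (heul : Eulerian d)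
    (hsc : StronglyConnected d) {g : V → ℤ} (hg : laplacian d *ᵥ g = 0) (a b : V) :
    g a = g b := by
  obtain ⟨m, -, hm⟩ := exists_max_image univ g ⟨a, mem_univ a⟩
  have hstep : ∀ p q, d p q ≠ 0 → g q = g m → g p = g m := by
    intro p q hpq hq
    have hterms : ∀ u ∈ univ, (d u q : ℤ) * (g u - g q) ≤ 0 := fun u _ =>
      mul_nonpos_of_nonneg_of_nonpos (by positivity) (by linarith [hm u (mem_univ u)])
    have hsum := laplacian_mulVec_apply hloop heul g q
    rw [hg, Pi.zero_apply, eq_comm] at hsum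
    have := (sum_eq_zero_iff_of_nonpos hterms).1 hsum p (mem_univ p)
    rcases mul_eq_zero.1 this with h | h
    · exact absurd (by exact_mod_cast h) hpq
    · linarith
  have hmax : ∀ w, g w = g m := fun w => by
    induction hsc w m using Relation.ReflTransGen.head_induction_on with
    | refl => rfl
    | head h _ ih => exact hstep _ _ h ih
  rw [hmax a, hmax b]

lemma LegalSeq.runGame_le_of_isMax {x : V → ℕ} {γ : List V} (hγ : LegalSeq d x γ)
    (hloop : Loopless d) (heul : Eulerian d) {w : V} (hw : ∀ u, γ.count u ≤ γ.count w) :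
    runGame d x γ w ≤ x w := by
  have hnonpos := laplacian_mulVec_nonpos_of_isMax hloop heul
    (g := fun u => (γ.count u : ℤ)) (v := w) (by exact_mod_cast hw)
  have := runGame_cast hγ w
  omega

/-- Look at the first moment some vertex `w` is fired for the maximal number of times: every
vertex has been fired at most as often as `w` before, so `w` has gained no chips. -/
lemma LegalSeq.exists_ready_of_isMax {x : V → ℕ} {γ : List V} (hγ : LegalSeq d x γ)
    (hloop : Loopless d) (heul : Eulerian d) (hne : γ ≠ []) :
    ∃ w, (∀ u, γ.count u ≤ γ.count w) ∧ outdeg d w ≤ x w := by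
  induction γ using List.reverseRecOn with
  | nil => exact absurd rfl hne
  | append_singleton γ w ih =>
    obtain ⟨hγ, hw, -⟩ := legalSeq_append.1 hγ
    simp only [List.count_append, List.count_singleton, beq_iff_eq]
    by_cases hmax : ∀ u, γ.count u ≤ γ.count w
    · refine ⟨w, fun u => ?_, hw.trans (hγ.runGame_le_of_isMax hloop heul hmax)⟩
      by_cases h : w = u
      · subst h; simp
      · simp only [h, if_false]; have := hmax u; omega
    · push Not at hmax
      obtain ⟨u₀, hu₀⟩ := hmax
      have hne : γ ≠ [] := List.ne_nil_of_mem (a := u₀) (List.count_pos_iff.1 (by omega))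
      obtain ⟨v, hv, hready⟩ := ih hγ hne
      refine ⟨v, fun u => ?_, hready⟩
      have := hv u
      have := hv u₀
      by_cases h : w = u
      · subst h; simp only [if_true]; split_ifs <;> omega
      · simp only [h, if_false]; split_ifs <;> omega

lemma LegalSeq.exists_perm_fire_top {x : V → ℕ} {γ : List V} (hγ : LegalSeq d x γ)
    (hloop : Loopless d) (heul : Eulerian d) {A : Finset V} {s : ℕ} (hs : 0 < s)
    (hA : ∀ u ∈ A, γ.count u = s) (hAc : ∀ u ∉ A, γ.count u < s) :
    ∃ σ β, LegalSeq d x (σ ++ β) ∧ (σ ++ β).Perm γ ∧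
      ∀ v, σ.count v = if v ∈ A then 1 else 0 := by
  induction A using Finset.strongInduction generalizing x γ with
  | H A ih =>
    rcases A.eq_empty_or_nonempty with rfl | ⟨a, ha⟩
    · exact ⟨[], γ, hγ, .refl γ, by simp⟩
    have hne : γ ≠ [] := List.ne_nil_of_mem (List.count_pos_iff.1 (by rw [hA a ha]; exact hs))
    obtain ⟨w, hw, hready⟩ := hγ.exists_ready_of_isMax hloop heul hne
    have hwA : w ∈ A := by
      by_contra h
      have := hw a
      have := hAc w h
      have := hA a ha
      omega
    have hwγ : w ∈ γ := List.count_pos_iff.1 (by rw [hA w hwA]; exact hs)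
    have hfront := hγ.cons_erase hready
    obtain ⟨σ, β, hσβ, hperm, hσ⟩ := ih (A.erase w) (erase_ssubset hwA) hfront.2
      (fun u hu => by
        rw [List.count_erase, hA u (mem_of_mem_erase hu),
          if_neg (by simpa using (ne_of_mem_erase hu).symm), Nat.sub_zero])
      (fun u hu => by
        rw [List.count_erase]
        by_cases huw : u = w
        · rw [huw, if_pos (beq_self_eq_true w), hA w hwA]
          omega
        · rw [if_neg (by simpa using Ne.symm huw)]
          exact hAc u (by simpa [huw] using hu))
    refine ⟨w :: σ, β, ⟨hready, hσβ⟩, ((hperm.cons w).trans (List.perm_cons_erase hwγ).symm), ?_⟩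
    intro v
    rw [List.count_cons, hσ v]
    by_cases hvw : v = w
    · subst hvw; simp [hwA]
    · simp [hvw, Ne.symm hvw]

lemma LegalSeq.count_sub_eq {x : V → ℕ} {γ : List V} (hγ : LegalSeq d x γ) (hloop : Loopless d)
    (heul : Eulerian d) (hsc : StronglyConnected d) {g : V → ℤ}
    (hg : ∀ v, (runGame d x γ v : ℤ) = x v + (laplacian d *ᵥ g) v) (a b : V) :
    γ.count a - g a = γ.count b - g b := by
  refine eq_of_laplacian_mulVec_eq_zero hloop heul hsc (g := fun u => γ.count u - g u) ?_ a b
  ext v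
  have := runGame_cast hγ v
  rw [show (fun u => (γ.count u : ℤ) - g u) = (fun u => (γ.count u : ℤ)) - g from rfl,
    mulVec_sub, Pi.sub_apply, Pi.zero_apply]
  linarith [hg v]

lemma Reaches.exists_legalSeq_fire_once {x y : V → ℕ} (hxy : Reaches d x y) (hloop : Loopless d)
    (heul : Eulerian d) (hsc : StronglyConnected d) {A : Finset V} {w : V} (hw : w ∉ A)
    (hy : ∀ v, (y v : ℤ) = x v + (laplacian d *ᵥ fun u => if u ∈ A then 1 else 0) v) :
    ∃ σ : List V, LegalSeq d x σ ∧ ∀ v, σ.count v = if v ∈ A then 1 else 0 := by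
  obtain ⟨γ, hγ, rfl⟩ := hxy
  have hcount := hγ.count_sub_eq hloop heul hsc hy
  obtain ⟨σ, β, hσβ, -, hσ⟩ := hγ.exists_perm_fire_top hloop heul (A := A) (s := γ.count w + 1)
    (Nat.succ_pos _) (fun u hu => by have := hcount u w; simp [hu, hw] at this; omega)
    (fun u hu => by have := hcount u w; simp [hu, hw] at this; omega)
  exact ⟨σ, (legalSeq_append.1 hσβ).1, hσ⟩

end Firing

section Layers

variable {V : Type*} [Fintype V]

def layer (f : V → ℕ) (t j : ℕ) : Finset V := {v | t + 1 - j ≤ f v}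

@[simp] lemma mem_layer {f : V → ℕ} {t j : ℕ} {v : V} : v ∈ layer f t j ↔ t + 1 - j ≤ f v := by
  simp [layer]

variable [DecidableEq V] (d : V → V → ℕ) (x f : V → ℕ) (t : ℕ)

def layerSum (j : ℕ) (u : V) : ℤ := ∑ ℓ ∈ Icc 1 (j - 1), if u ∈ layer f t ℓ then 1 else 0

def layerConfig (j : ℕ) (v : V) : ℤ := x v + (laplacian d *ᵥ layerSum f t j) v

def LayerStepReaches (j : ℕ) : Prop :=
  ∃ z z' : V → ℕ, (∀ v, (z v : ℤ) = layerConfig d x f t j v) ∧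
    (∀ v, (z' v : ℤ) = layerConfig d x f t (j + 1) v) ∧ Reaches d z z'

variable {d x f t}

lemma layerSum_eq (hft : ∀ v, f v ≤ t) (j : ℕ) (u : V) :
    layerSum f t j u = ((j + f u - (t + 1) : ℕ) : ℤ) := by
  have hfilter : {ℓ ∈ Icc 1 (j - 1) | u ∈ layer f t ℓ} = Icc (t + 1 - f u) (j - 1) := by
    ext ℓ
    simp only [mem_filter, mem_Icc, mem_layer]
    have := hft u
    omega
  rw [layerSum, sum_boole, hfilter, Nat.card_Icc]
  have := hft u
  congr 1
  omega

lemma layerSum_succ (hft : ∀ v, f v ≤ t) (j : ℕ) :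
    layerSum f t (j + 1) = layerSum f t j + fun u => if u ∈ layer f t j then 1 else 0 := by
  ext u
  simp only [layerSum_eq hft, Pi.add_apply, mem_layer]
  have := hft u
  split_ifs <;> omega

lemma layerConfig_of_le_one (hft : ∀ v, f v ≤ t) {j : ℕ} (hj : j ≤ 1) (v : V) :
    layerConfig d x f t j v = x v := by
  have : layerSum f t j = 0 := by
    ext u
    simp only [layerSum_eq hft, Pi.zero_apply]
    have := hft u
    omega
  simp [layerConfig, this]

lemma layerConfig_succ (hft : ∀ v, f v ≤ t) (j : ℕ) (v : V) :
    layerConfig d x f t (j + 1) v =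
      layerConfig d x f t j v + (laplacian d *ᵥ fun u => if u ∈ layer f t j then 1 else 0) v := by
  simp only [layerConfig, layerSum_succ hft, mulVec_add, Pi.add_apply]
  ring

lemma layerConfig_last (hft : ∀ v, f v ≤ t) (v : V) :
    layerConfig d x f t (t + 1) v = x v + (laplacian d *ᵥ fun u => (f u : ℤ)) v := by
  have : layerSum f t (t + 1) = fun u => (f u : ℤ) := by
    ext u
    simp only [layerSum_eq hft]
    congr 1
    omega
  rw [layerConfig, this]

lemma LegalSeq.runGame_eq_layerConfig_succ (hft : ∀ v, f v ≤ t) {j : ℕ} {z : V → ℕ}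
    (hz : ∀ v, (z v : ℤ) = layerConfig d x f t j v) {σ : List V} (hσ : LegalSeq d z σ)
    (hcount : ∀ v, σ.count v = if v ∈ layer f t j then 1 else 0) (v : V) :
    (runGame d z σ v : ℤ) = layerConfig d x f t (j + 1) v := by
  rw [runGame_cast hσ, hz, layerConfig_succ hft]
  congr 3
  ext u
  simp [hcount u]

lemma LegalSeq.exists_reaches_layerConfig_succ {z : V → ℕ} {γ : List V} (hγ : LegalSeq d z γ)
    (hloop : Loopless d) (heul : Eulerian d) (hft : ∀ v, f v ≤ t) {j k : ℕ} (hj : j ≤ t)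
    (hz : ∀ v, (z v : ℤ) = layerConfig d x f t j v)
    (hcount : ∀ v, (γ.count v : ℤ) = f v + k - layerSum f t j v) :
    ∃ z' β, (∀ v, (z' v : ℤ) = layerConfig d x f t (j + 1) v) ∧ Reaches d z z' ∧
      LegalSeq d z' β ∧ ∀ v, (β.count v : ℤ) = f v + k - layerSum f t (j + 1) v := by
  have hcount' : ∀ v, γ.count v = f v + k - (j + f v - (t + 1)) := fun v => by
    have := hcount v
    rw [layerSum_eq hft] at this
    omega
  obtain ⟨σ, β, hσβ, hperm, hσ⟩ := hγ.exists_perm_fire_top hloop heul (A := layer f t j)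
    (s := t + k + 1 - j) (by omega)
    (fun u hu => by rw [hcount' u]; rw [mem_layer] at hu; omega)
    (fun u hu => by rw [hcount' u]; rw [mem_layer] at hu; have := hft u; omega)
  obtain ⟨hσleg, hβleg⟩ := legalSeq_append.1 hσβ
  refine ⟨runGame d z σ, β, hσleg.runGame_eq_layerConfig_succ hft hz hσ, ⟨σ, hσleg, rfl⟩,
    hβleg, fun v => ?_⟩
  have hsplit := hperm.count_eq v
  rw [List.count_append, hσ v] at hsplit
  have := hcount v
  rw [layerSum_succ hft, Pi.add_apply]
  split_ifs at hsplit ⊢ <;> omega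

lemma Reaches.layerStepReaches {y : V → ℕ} (hxy : Reaches d x y) (hloop : Loopless d)
    (heul : Eulerian d) (hsc : StronglyConnected d) (hft : ∀ v, f v ≤ t) {v₀ : V} (hv₀ : f v₀ = 0)
    (hy : ∀ v, (y v : ℤ) = x v + (laplacian d *ᵥ fun u => (f u : ℤ)) v) {j : ℕ} (hj : j ≤ t) :
    LayerStepReaches d x f t j := by
  obtain ⟨α, hα, rfl⟩ := hxy
  have hcount : ∀ v, (α.count v : ℤ) = f v + α.count v₀ := fun v => by
    have := hα.count_sub_eq hloop heul hsc hy v v₀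
    rw [hv₀, Nat.cast_zero] at this
    linarith
  have hgames : ∀ i ≤ t, ∃ z γ, (∀ v, (z v : ℤ) = layerConfig d x f t i v) ∧ LegalSeq d z γ ∧
      ∀ v, (γ.count v : ℤ) = f v + α.count v₀ - layerSum f t i v := by
    intro i hi
    induction i with
    | zero =>
      refine ⟨x, α, fun v => (layerConfig_of_le_one hft zero_le_one v).symm, hα, fun v => ?_⟩
      rw [hcount v, layerSum_eq hft]
      have := hft v
      simp [show f v - (t + 1) = 0 by omega]
    | succ i ih =>
      obtain ⟨z, γ, hz, hγ, hγcount⟩ := ih (by omega)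
      obtain ⟨z', β, hz', -, hβ, hβcount⟩ :=
        hγ.exists_reaches_layerConfig_succ hloop heul hft (by omega) hz hγcount
      exact ⟨z', β, hz', hβ, hβcount⟩
  obtain ⟨z, γ, hz, hγ, hγcount⟩ := hgames j hj
  obtain ⟨z', -, hz', hzz', -⟩ := hγ.exists_reaches_layerConfig_succ hloop heul hft hj hz hγcount
  exact ⟨z, z', hz, hz', hzz'⟩

lemma LayerStepReaches.exists_legalSeq_fire_layer {j : ℕ} (h : LayerStepReaches d x f t j)
    (hloop : Loopless d) (heul : Eulerian d) (hsc : StronglyConnected d) (hft : ∀ v, f v ≤ t)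
    {v₀ : V} (hv₀ : f v₀ = 0) (hj : j ≤ t) :
    ∃ σ : List V, (∀ v, σ.count v = if v ∈ layer f t j then 1 else 0) ∧
      ∀ w : V → ℕ, (∀ v ∈ layer f t j, layerConfig d x f t j v ≤ w v) → LegalSeq d w σ := by
  obtain ⟨z, z', hz, hz', hzz'⟩ := h
  obtain ⟨σ, hσ, hcount⟩ := hzz'.exists_legalSeq_fire_once hloop heul hsc (A := layer f t j)
    (w := v₀) (by simp only [mem_layer, hv₀]; omega)
    fun v => by rw [hz', hz, layerConfig_succ hft]
  refine ⟨σ, hcount, fun w hw => hσ.mono fun v hv => ?_⟩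
  have hvS : v ∈ layer f t j := by
    by_contra h
    have := List.count_pos_iff.2 hv
    simp [hcount v, h] at this
  have := hw v hvS
  have := hz v
  omega

lemma exists_legalSeq_fire_layer_of_marked (hloop : Loopless d) (heul : Eulerian d)
    (hsc : StronglyConnected d) (hft : ∀ v, f v ≤ t) {v₀ : V} (hv₀ : f v₀ = 0)
    (hmarked : ∀ j ∈ Icc 1 t, (j = t ∨ layer f t j ≠ layer f t (j + 1)) →
      LayerStepReaches d x f t j)
    {j : ℕ} (hj1 : 1 ≤ j) (hjt : j ≤ t) :
    ∃ σ : List V, (∀ v, σ.count v = if v ∈ layer f t j then 1 else 0) ∧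
      ∀ w : V → ℕ, (∀ v ∈ layer f t j, layerConfig d x f t j v ≤ w v) → LegalSeq d w σ := by
  induction hjt using Nat.decreasingInduction with
  | self =>
    exact (hmarked t (mem_Icc.2 ⟨hj1, le_rfl⟩) (Or.inl rfl)).exists_legalSeq_fire_layer
      hloop heul hsc hft hv₀ le_rfl
  | of_succ j hjt ih =>
    by_cases hsame : layer f t j = layer f t (j + 1)
    · obtain ⟨σ, hcount, hσ⟩ := ih (by omega)
      refine ⟨σ, by rwa [hsame], fun w hw => hσ w fun v hv => ?_⟩
      rw [← hsame] at hv
      have hnonpos : (laplacian d *ᵥ fun u => if u ∈ layer f t j then 1 else 0) v ≤ 0 :=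
        laplacian_mulVec_nonpos_of_isMax hloop heul fun u => by split_ifs <;> simp
      rw [layerConfig_succ hft]
      linarith [hw v hv]
    · exact (hmarked j (mem_Icc.2 ⟨hj1, hjt.le⟩) (Or.inr hsame)).exists_legalSeq_fire_layer
        hloop heul hsc hft hv₀ hjt.le

lemma reaches_of_layerStepReaches_marked (hloop : Loopless d) (heul : Eulerian d)
    (hsc : StronglyConnected d) (hft : ∀ v, f v ≤ t) {v₀ : V} (hv₀ : f v₀ = 0) {y : V → ℕ}
    (hy : ∀ v, (y v : ℤ) = x v + (laplacian d *ᵥ fun u => (f u : ℤ)) v)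
    (hmarked : ∀ j ∈ Icc 1 t, (j = t ∨ layer f t j ≠ layer f t (j + 1)) →
      LayerStepReaches d x f t j) :
    Reaches d x y := by
  have hreach : ∀ j ≤ t, ∃ z : V → ℕ,
      (∀ v, (z v : ℤ) = layerConfig d x f t (j + 1) v) ∧ Reaches d x z := by
    intro j hj
    induction j with
    | zero => exact ⟨x, fun v => (layerConfig_of_le_one hft le_rfl v).symm, [], trivial, rfl⟩
    | succ j ih =>
      obtain ⟨z, hz, hxz⟩ := ih (by omega)
      obtain ⟨σ, hcount, hσ⟩ :=
        exists_legalSeq_fire_layer_of_marked hloop heul hsc hft hv₀ hmarked (by omega) hj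
      have hσz := hσ z fun v _ => (hz v).ge
      exact ⟨runGame d z σ, hσz.runGame_eq_layerConfig_succ hft hz hcount,
        hxz.trans ⟨σ, hσz, rfl⟩⟩
  obtain ⟨z, hz, hxz⟩ := hreach t le_rfl
  convert hxz
  ext v
  rw [← Nat.cast_inj (R := ℤ), hy, hz, layerConfig_last hft]

end Layers

theorem eulerian_reachability_criterion_general {V : Type*} [Fintype V] [DecidableEq V]
    (d : V → V → ℕ) (hloop : Loopless d) (hconn : WeaklyConnected d) (heul : Eulerian d)
    (x y f : V → ℕ) (hmin : ∃ v, f v = 0)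
    (hy : ∀ v, (y v : ℤ) = (x v : ℤ) + (laplacian d).mulVec (fun u => (f u : ℤ)) v)
    (t : ℕ) (ht : t = Finset.univ.sup f)
    (S : ℕ → Finset V) (hS : ∀ j, S j = Finset.univ.filter (fun v => t + 1 - j ≤ f v))
    (xs : ℕ → V → ℤ)
    (hxs : ∀ j v, xs j v = (x v : ℤ) + (laplacian d).mulVec
        (fun u => ∑ ℓ ∈ Finset.Icc 1 (j - 1), (if u ∈ S ℓ then (1 : ℤ) else 0)) v) :
    Reaches d x y ↔
      ∀ j ∈ Finset.Icc 1 t, (j = t ∨ S j ≠ S (j + 1)) →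
        (∀ v, 0 ≤ xs j v) ∧
        ∃ xj xj1 : V → ℕ, (∀ v, (xj v : ℤ) = xs j v) ∧ (∀ v, (xj1 v : ℤ) = xs (j + 1) v) ∧
          Reaches d xj xj1 := by
  obtain ⟨v₀, hv₀⟩ := hmin
  have hft : ∀ v, f v ≤ t := fun v => ht ▸ le_sup (mem_univ v)
  have hsc := hconn.stronglyConnected heul
  obtain rfl : S = layer f t := funext hS
  obtain rfl : xs = layerConfig d x f t := funext fun j => funext (hxs j)
  constructor
  · intro hxy j hj _
    obtain ⟨z, z', hz, hz', hzz'⟩ :=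
      hxy.layerStepReaches hloop heul hsc hft hv₀ hy (mem_Icc.1 hj).2
    exact ⟨fun v => hz v ▸ Int.natCast_nonneg _, z, z', hz, hz', hzz'⟩
  · intro h
    exact reaches_of_layerStepReaches_marked hloop heul hsc hft hv₀ hy fun j hj hm => (h j hj hm).2

/-- Correctness of the Eulerian reachability algorithm. Let `G` be a
connected Eulerian digraph, `f ∈ ℕ^V` nonzero with `y = x + Lf` and `min f = 0`, let
`t = max f`, `S j = {v : f v ≥ t - j + 1}` for `1 ≤ j ≤ t`, and
`xs j = x + L·∑_{ℓ=1}^{j-1} 1_{S ℓ}`. Then `x ⤳ y` iff for every `j ∈ {1, …, t}` which is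
the last occurrence of a distinct set in the chain `S_1 ⊆ … ⊆ S_t` (i.e. `j = t` or
`S j ≠ S (j+1)`), the vector `xs j` is a nonnegative chip-distribution and there is a
legal game from `xs j` to `xs (j+1)`. -/
theorem eulerian_reachability_criterion {V : Type*} [Fintype V] [DecidableEq V]
    (d : V → V → ℕ) (hloop : Loopless d) (hconn : WeaklyConnected d) (heul : Eulerian d)
    (x y f : V → ℕ) (hf : f ≠ 0) (hmin : ∃ v, f v = 0)
    (hy : ∀ v, (y v : ℤ) = (x v : ℤ) + (laplacian d).mulVec (fun u => (f u : ℤ)) v)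
    (t : ℕ) (ht : t = Finset.univ.sup f)
    (S : ℕ → Finset V) (hS : ∀ j, S j = Finset.univ.filter (fun v => t + 1 - j ≤ f v))
    (xs : ℕ → V → ℤ)
    (hxs : ∀ j v, xs j v = (x v : ℤ) + (laplacian d).mulVec
        (fun u => ∑ ℓ ∈ Finset.Icc 1 (j - 1), (if u ∈ S ℓ then (1 : ℤ) else 0)) v) :
    Reaches d x y ↔
      ∀ j ∈ Finset.Icc 1 t, (j = t ∨ S j ≠ S (j + 1)) →
        (∀ v, 0 ≤ xs j v) ∧
        ∃ xj xj1 : V → ℕ, (∀ v, (xj v : ℤ) = xs j v) ∧ (∀ v, (xj1 v : ℤ) = xs (j + 1) v) ∧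
          Reaches d xj xj1 :=
  eulerian_reachability_criterion_general d hloop hconn heul x y f hmin hy t ht S hS xs hxs

end ChipFiring
end

section
/- Let G be the digraph on vertex set {v_1, v_2, v_3, v_4, v_5, v_6} whose edges (each of multiplicity 1) are: v_1→v_2, v_2→v_1, v_2→v_3, v_3→v_2, v_3→v_4, v_4→v_3, v_4→v_1, v_1→v_4, v_3→v_5, v_4→v_6, v_5→v_6, v_6→v_5. Let x = (1,1,0,0,1,0) and y = (0,0,1,1,1,0). Then: (a) y is recurrent; (b) y = x + Lf for the nonnegative vector f = (1,1,0,0,0,0), which is reduced; and (c) y is not reachable from x by a legal game, i.e., ¬(x ⤳ y). -/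
namespace ChipFiring

/-- The digraph of Example 5 (vertices `v_1, …, v_6` indexed by `0, …, 5`). -/
def exampleDigraph : Fin 6 → Fin 6 → ℕ := fun u v =>
  if (u, v) ∈ [((0 : Fin 6), (1 : Fin 6)), (1, 0), (1, 2), (2, 1), (2, 3), (3, 2),
      (3, 0), (0, 3), (2, 4), (3, 5), (4, 5), (5, 4)] then 1 else 0

lemma cv0 {α : Type*} (a b c d e f : α) : (![a,b,c,d,e,f] : Fin 6 → α) 0 = a := rfl
lemma cv1 {α : Type*} (a b c d e f : α) : (![a,b,c,d,e,f] : Fin 6 → α) 1 = b := rfl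
lemma cv2 {α : Type*} (a b c d e f : α) : (![a,b,c,d,e,f] : Fin 6 → α) 2 = c := rfl
lemma cv3 {α : Type*} (a b c d e f : α) : (![a,b,c,d,e,f] : Fin 6 → α) 3 = d := rfl
lemma cv4 {α : Type*} (a b c d e f : α) : (![a,b,c,d,e,f] : Fin 6 → α) 4 = e := rfl
lemma cv5 {α : Type*} (a b c d e f : α) : (![a,b,c,d,e,f] : Fin 6 → α) 5 = f := rfl

lemma lap_eq : laplacian exampleDigraph =
    !![-2, 1, 0, 1, 0, 0;
        1, -2, 1, 0, 0, 0;
        0, 1, -3, 1, 0, 0;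
        1, 0, 1, -3, 0, 0;
        0, 0, 1, 0, -1, 1;
        0, 0, 0, 1, 1, -1] := by
  decide

lemma aux_invariant : ∀ (α : List (Fin 6)) (z : Fin 6 → ℕ),
    (z = ![1, 1, 0, 0, 1, 0] ∨ z = ![1, 1, 0, 0, 0, 1]) →
    LegalSeq exampleDigraph z α →
    (runGame exampleDigraph z α = ![1, 1, 0, 0, 1, 0] ∨
     runGame exampleDigraph z α = ![1, 1, 0, 0, 0, 1]) := by
  intro α
  induction α with
  | nil => intro z hz _; exact hz
  | cons v rest ih =>
    intro z hz hleg
    obtain ⟨h1, h2⟩ := hleg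
    rcases hz with rfl | rfl
    · have hv : v = 4 := by
        fin_cases v <;> first | rfl | (exfalso; revert h1; decide)
      subst hv
      have hf : fire exampleDigraph ![1, 1, 0, 0, 1, 0] 4 = ![1, 1, 0, 0, 0, 1] := by
        decide
      rw [runGame, hf]
      exact ih _ (Or.inr rfl) (hf ▸ h2)
    · have hv : v = 5 := by
        fin_cases v <;> first | rfl | (exfalso; revert h1; decide)
      subst hv
      have hf : fire exampleDigraph ![1, 1, 0, 0, 0, 1] 5 = ![1, 1, 0, 0, 1, 0] := by
        decide
      rw [runGame, hf]
      exact ih _ (Or.inl rfl) (hf ▸ h2)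

/-- On the example digraph, with `x = (1,1,0,0,1,0)` and
`y = (0,0,1,1,1,0)`: (a) `y` is recurrent; (b) `y = x + Lf` for the nonnegative vector
`f = (1,1,0,0,0,0)`, which is reduced; (c) `¬(x ⤳ y)`. -/
theorem example_recurrent_not_reachable :
    Recurrent exampleDigraph ![0, 0, 1, 1, 1, 0] ∧
    (∀ v, ((![0, 0, 1, 1, 1, 0] : Fin 6 → ℕ) v : ℤ) =
      ((![1, 1, 0, 0, 1, 0] : Fin 6 → ℕ) v : ℤ) +
        (laplacian exampleDigraph).mulVec
          (fun u => (((![1, 1, 0, 0, 0, 0] : Fin 6 → ℕ) u : ℤ))) v) ∧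
    Reduced exampleDigraph ![1, 1, 0, 0, 0, 0] ∧
    ¬ Reaches exampleDigraph ![1, 1, 0, 0, 1, 0] ![0, 0, 1, 1, 1, 0] := by
  refine ⟨⟨[4, 5], by decide, ⟨by decide, by decide, trivial⟩, by decide⟩, ?_, ?_, ?_⟩
  · decide
  · intro p hp hne hle
    have e2 := congrFun hp 2
    have e3 := congrFun hp 3
    have e4 := congrFun hp 4
    have e5 := congrFun hp 5
    rw [PeriodVector, lap_eq] at hp
    have e2 := congrFun hp 2
    have e3 := congrFun hp 3
    have e4 := congrFun hp 4
    have e5 := congrFun hp 5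
    simp only [Matrix.mulVec, dotProduct, Fin.sum_univ_six, Matrix.of_apply,
      cv0, cv1, cv2, cv3, cv4, cv5, Pi.zero_apply] at e2 e3 e4 e5
    have h2 : p 2 ≤ 0 := hle 2
    have h3 : p 3 ≤ 0 := hle 3
    have h4 : p 4 ≤ 0 := hle 4
    have h5 : p 5 ≤ 0 := hle 5
    apply hne
    funext v
    fin_cases v <;> simp <;> omega
  · rintro ⟨α, hleg, hrun⟩
    have := aux_invariant α _ (Or.inl rfl) hleg
    rw [hrun] at this
    rcases this with h | h <;> exact absurd (congrFun h 2) (by decide)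

end ChipFiring
end
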